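/- arXiv:2604.23770 — 3 statements merged into one kernel-verified Lean document; each statement's English description precedes it below -/
import Mathlib

section
/- Under the fixed-label bootstrap, the bootstrap expectation of B̂* ≡ n^{-1/2} Σ_{i=1}^n (θ̂*_i(1−θ*_i) D_{+i} + θ*_i(1−θ̂*_i) D_{−i}) satisfies the exact identity E*[B̂*] = κ̂₊ (1−π̂)⁻¹ n⁻¹ Σ_{i=1}^n (1−θ̂_i) D_{+i} + κ̂₋ π̂⁻¹ n⁻¹ Σ_{i=1}^n θ̂_i D_{−i}, where κ̂₊ = √n F̂₊ and κ̂₋ = √n F̂₋. -/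
open MeasureTheory ProbabilityTheory Filter Finset Topology

noncomputable section

attribute [local instance] Matrix.normedAddCommGroup Matrix.normedSpace

/-- Outer product `x y'` as a matrix. -/
def outer {ι κ : Type*} (x : ι → ℝ) (y : κ → ℝ) : Matrix ι κ ℝ :=
  Matrix.of fun a b => x a * y b

/-- Euclidean dot product on `Fin k → ℝ`. -/
def dotR {k : ℕ} (x y : Fin k → ℝ) : ℝ := ∑ j, x j * y j

/-- Convergence in probability for a triangular array whose law may depend on `n`. -/
def TendstoInProb {Ω : Type*} [MeasurableSpace Ω] {E : Type*} [NormedAddCommGroup E]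
    (P : ℕ → Measure Ω) (X : ℕ → Ω → E) (c : E) : Prop :=
  ∀ ε : ℝ, 0 < ε →
    Tendsto (fun n => (P n {ω | ε ≤ ‖X n ω - c‖}).toReal) atTop (𝓝 0)

/-- Characteristic function of the `N(b, V)` distribution on `ℝ^k`. -/
def gaussCF {k : ℕ} (b : Fin k → ℝ) (V : Matrix (Fin k) (Fin k) ℝ) (t : Fin k → ℝ) : ℂ :=
  Complex.exp (Complex.I * (dotR t b : ℝ) - (dotR t (V.mulVec t) : ℝ) / 2)

/-- Convergence in distribution to `N(b, V)`, stated via characteristic functions. -/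
def TendstoGaussian {Ω : Type*} [MeasurableSpace Ω] {k : ℕ}
    (P : ℕ → Measure Ω) (X : ℕ → Ω → (Fin k → ℝ))
    (b : Fin k → ℝ) (V : Matrix (Fin k) (Fin k) ℝ) : Prop :=
  ∀ t : Fin k → ℝ,
    Tendsto (fun n => ∫ ω, Complex.exp (Complex.I * (dotR t (X n ω) : ℝ)) ∂(P n))
      atTop (𝓝 (gaussCF b V t))

/-- Bootstrap convergence in conditional (bootstrap) probability, in probability: `→_{p*}`. -/
def TendstoInProbStar {Ω Ω' : Type*} [MeasurableSpace Ω] [MeasurableSpace Ω']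
    {E : Type*} [NormedAddCommGroup E]
    (P : ℕ → Measure Ω) (ν : ℕ → Ω → Measure Ω')
    (X : ℕ → Ω → Ω' → E) (c : E) : Prop :=
  ∀ ε : ℝ, 0 < ε →
    TendstoInProb P (fun n ω => ((ν n ω) {ω' | ε ≤ ‖X n ω ω' - c‖}).toReal) (0 : ℝ)

/-- Bootstrap convergence in distribution to `N(b,V)`: `→_{d*}`, via bootstrap
characteristic functions converging in probability. -/
def TendstoGaussianStar {Ω Ω' : Type*} [MeasurableSpace Ω] [MeasurableSpace Ω'] {k : ℕ}
    (P : ℕ → Measure Ω) (ν : ℕ → Ω → Measure Ω')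
    (X : ℕ → Ω → Ω' → (Fin k → ℝ))
    (b : Fin k → ℝ) (V : Matrix (Fin k) (Fin k) ℝ) : Prop :=
  ∀ t : Fin k → ℝ,
    TendstoInProb P
      (fun n ω =>
        (∫ ω', Complex.exp (Complex.I * (dotR t (X n ω ω') : ℝ)) ∂(ν n ω)) - gaussCF b V t)
      (0 : ℂ)

/-- The OLS estimator from regressing `Y` on `Xh`, at sample size `n`. -/
def olsHat {Ω : Type*} {k : ℕ} (Xh : ℕ → ℕ → Ω → (Fin k → ℝ)) (Y : ℕ → ℕ → Ω → ℝ)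
    (n : ℕ) (ω : Ω) : Fin k → ℝ :=
  ((n : ℝ)⁻¹ • ∑ i ∈ Finset.range n, outer (Xh n i ω) (Xh n i ω))⁻¹.mulVec
    ((n : ℝ)⁻¹ • ∑ i ∈ Finset.range n, (Y n i ω) • Xh n i ω)

/-- Under the fixed-label bootstrap, the bootstrap expectation of
`B̂* = n^{-1/2} Σᵢ (θ̂*ᵢ(1−θ*ᵢ) D₊ᵢ + θ*ᵢ(1−θ̂*ᵢ) D₋ᵢ)` (with `θ*ᵢ = θ̂ᵢ`) satisfies the exact
identity `E*[B̂*] = κ̂₊ (1−π̂)⁻¹ n⁻¹ Σᵢ (1−θ̂ᵢ) D₊ᵢ + κ̂₋ π̂⁻¹ n⁻¹ Σᵢ θ̂ᵢ D₋ᵢ`, where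
`κ̂₊ = √n F̂₊` and `κ̂₋ = √n F̂₋`. -/
theorem statement13 {k dz : ℕ} {Ω' : Type*} [MeasurableSpace Ω']
    (ν : Measure Ω') (hν : IsProbabilityMeasure ν)
    (n : ℕ) (hn : 0 < n)
    (g : ℝ → (Fin dz → ℝ) → (Fin k → ℝ))
    (Z : ℕ → (Fin dz → ℝ)) (θh : ℕ → ℝ) (θhstar : ℕ → Ω' → ℝ)
    (Fp Fm πh : ℝ)
    (hπdef : πh = (n : ℝ)⁻¹ * ∑ i ∈ Finset.range n, θh i)
    (hπ : 0 < πh) (hπ1 : πh < 1)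
    (hFp0 : 0 ≤ Fp) (hFm0 : 0 ≤ Fm) (hFp1 : Fp ≤ 1 - πh) (hFm1 : Fm ≤ πh)
    (hθh01 : ∀ i, θh i = 0 ∨ θh i = 1)
    (h01 : ∀ i ω', θhstar i ω' = 0 ∨ θhstar i ω' = 1)
    (hmeas : ∀ i, Measurable (θhstar i))
    -- fixed-label bootstrap: θ̂*ᵢ is Bernoulli conditional on θ̂ᵢ
    (hb1 : ∀ i < n, θh i = 1 →
      (ν {ω' | θhstar i ω' = 0}).toReal = Fm / πh ∧
      (ν {ω' | θhstar i ω' = 1}).toReal = 1 - Fm / πh)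
    (hb0 : ∀ i < n, θh i = 0 →
      (ν {ω' | θhstar i ω' = 1}).toReal = Fp / (1 - πh) ∧
      (ν {ω' | θhstar i ω' = 0}).toReal = 1 - Fp / (1 - πh)) :
    (∫ ω', (Real.sqrt n)⁻¹ •
        ∑ i ∈ Finset.range n,
          ((θhstar i ω' * (1 - θh i)) • outer (g 1 (Z i)) (g 1 (Z i) - g 0 (Z i))
            + (θh i * (1 - θhstar i ω')) • outer (g 0 (Z i)) (g 0 (Z i) - g 1 (Z i))) ∂ν)
    = (Real.sqrt n * Fp) • ((1 - πh)⁻¹ • ((n : ℝ)⁻¹ •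
          ∑ i ∈ Finset.range n, (1 - θh i) • outer (g 1 (Z i)) (g 1 (Z i) - g 0 (Z i))))
      + (Real.sqrt n * Fm) • (πh⁻¹ • ((n : ℝ)⁻¹ •
          ∑ i ∈ Finset.range n, θh i • outer (g 0 (Z i)) (g 0 (Z i) - g 1 (Z i)))) := by
  haveI := hν
  classical
  have hnne : ((n : ℝ)) ≠ 0 := Nat.cast_ne_zero.mpr hn.ne'
  have hsq : Real.sqrt n * Real.sqrt n = (n : ℝ) := Real.mul_self_sqrt (Nat.cast_nonneg n)
  have hsn : Real.sqrt n ≠ 0 := by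
    intro h
    rw [h, mul_zero] at hsq
    exact hnne hsq.symm
  have hinv : (Real.sqrt n)⁻¹ = Real.sqrt n * (n : ℝ)⁻¹ := by
    field_simp
    rw [sq, hsq]
  have hmset : ∀ i, MeasurableSet {ω' | θhstar i ω' = 1} :=
    fun i => hmeas i (measurableSet_singleton 1)
  have haeeq : ∀ i, (Set.indicator {ω' | θhstar i ω' = 1} (fun _ => (1:ℝ))) =ᵐ[ν] θhstar i := by
    intro i
    refine Filter.Eventually.of_forall fun ω' => ?_
    rcases h01 i ω' with h | h
    · simp [Set.indicator, h]
    · simp [Set.indicator, h]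
  have hint : ∀ i, Integrable (θhstar i) ν := by
    intro i
    exact ((integrable_const (1:ℝ)).indicator (hmset i)).congr (haeeq i)
  have hE : ∀ i, ∫ ω', θhstar i ω' ∂ν = (ν {ω' | θhstar i ω' = 1}).toReal := by
    intro i
    rw [← integral_congr_ae (haeeq i), integral_indicator_const _ (hmset i),
      smul_eq_mul, mul_one]
    rfl
  have hif1 : ∀ i, Integrable (fun ω' => θhstar i ω' * (1 - θh i)) ν :=
    fun i => (hint i).mul_const _
  have hif2 : ∀ i, Integrable (fun ω' => θh i * (1 - θhstar i ω')) ν :=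
    fun i => ((integrable_const (1:ℝ)).sub (hint i)).const_mul _
  have hI1 : ∀ i, ∫ ω', θhstar i ω' * (1 - θh i) ∂ν
      = (ν {ω' | θhstar i ω' = 1}).toReal * (1 - θh i) := by
    intro i
    rw [integral_mul_const, hE i]
  have hI2 : ∀ i, ∫ ω', θh i * (1 - θhstar i ω') ∂ν
      = θh i * (1 - (ν {ω' | θhstar i ω' = 1}).toReal) := by
    intro i
    rw [integral_const_mul, integral_sub (integrable_const (1:ℝ)) (hint i), hE i,
      integral_const, probReal_univ, smul_eq_mul, mul_one]
  have hsplit : ∀ i, ∫ ω', ((θhstar i ω' * (1 - θh i)) • outer (g 1 (Z i)) (g 1 (Z i) - g 0 (Z i))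
        + (θh i * (1 - θhstar i ω')) • outer (g 0 (Z i)) (g 0 (Z i) - g 1 (Z i))) ∂ν
      = ((ν {ω' | θhstar i ω' = 1}).toReal * (1 - θh i)) • outer (g 1 (Z i)) (g 1 (Z i) - g 0 (Z i))
        + (θh i * (1 - (ν {ω' | θhstar i ω' = 1}).toReal)) • outer (g 0 (Z i)) (g 0 (Z i) - g 1 (Z i)) := by
    intro i
    rw [integral_add ((hif1 i).smul_const _) ((hif2 i).smul_const _),
      integral_smul_const, integral_smul_const, hI1 i, hI2 i]
  have hsum : (∫ ω', ∑ i ∈ Finset.range n,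
        ((θhstar i ω' * (1 - θh i)) • outer (g 1 (Z i)) (g 1 (Z i) - g 0 (Z i))
          + (θh i * (1 - θhstar i ω')) • outer (g 0 (Z i)) (g 0 (Z i) - g 1 (Z i))) ∂ν)
      = ∑ i ∈ Finset.range n, ∫ ω',
        ((θhstar i ω' * (1 - θh i)) • outer (g 1 (Z i)) (g 1 (Z i) - g 0 (Z i))
          + (θh i * (1 - θhstar i ω')) • outer (g 0 (Z i)) (g 0 (Z i) - g 1 (Z i))) ∂ν :=
    integral_finset_sum _ (fun i _ => ((hif1 i).smul_const _).add ((hif2 i).smul_const _))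
  rw [integral_smul, hsum]
  simp only [hsplit]
  simp only [Finset.smul_sum]
  rw [← Finset.sum_add_distrib]
  refine Finset.sum_congr rfl ?_
  intro i hi
  have hi' := Finset.mem_range.mp hi
  rcases hθh01 i with h0 | h1
  · obtain ⟨hE1, -⟩ := hb0 i hi' h0
    rw [h0, hE1, hinv]
    module
  · obtain ⟨-, hE1⟩ := hb1 i hi' h1
    rw [h1, hE1, hinv]
    module

end
end

section
/- Under the variance-corrected coupled-label bootstrap, the bias term b* satisfies the exact identities E*[b* | F̂₊*, F̂₋*] = −√n (F̂₊* Γ₊β + F̂₋* Γ₋β) and Var*(E*[b* | F̂₊*, F̂₋*]) = (n F̂₊(1−F̂₊)/m) Γ₊ββ'Γ₊' + (n F̂₋(1−F̂₋)/m) Γ₋ββ'Γ₋'. -/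
open MeasureTheory ProbabilityTheory Filter Finset Topology

noncomputable section

attribute [local instance] Matrix.normedAddCommGroup Matrix.normedSpace

/-- `D₊ = g(1,Z)(g(1,Z) − g(0,Z))'`. -/
def Dplus {dz k : ℕ} (g : ℝ → (Fin dz → ℝ) → (Fin k → ℝ)) (z : Fin dz → ℝ) :
    Matrix (Fin k) (Fin k) ℝ := outer (g 1 z) (g 1 z - g 0 z)

/-- `D₋ = g(0,Z)(g(0,Z) − g(1,Z))'`. -/
def Dminus {dz k : ℕ} (g : ℝ → (Fin dz → ℝ) → (Fin k → ℝ)) (z : Fin dz → ℝ) :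
    Matrix (Fin k) (Fin k) ℝ := outer (g 0 z) (g 0 z - g 1 z)

/-- `G = max{‖g(0,Z)‖, ‖g(1,Z)‖}`. -/
def Gbound {dz k : ℕ} (g : ℝ → (Fin dz → ℝ) → (Fin k → ℝ)) (z : Fin dz → ℝ) : ℝ :=
  max ‖g 0 z‖ ‖g 1 z‖

/-- The bootstrap bias term
`b* = −n^{-1/2} Σᵢ [θ̂*ᵢ(1−θ*ᵢ) Γ₊β + θ*ᵢ(1−θ̂*ᵢ) Γ₋β]`. -/
def bstar {k : ℕ} {ΩL : Type*} (n : ℕ) (Γpβ Γmβ : Fin k → ℝ)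
    (θstar θhstar : ℕ → ΩL → ℝ) (ωL : ΩL) : Fin k → ℝ :=
  -((Real.sqrt n)⁻¹ • ∑ i ∈ Finset.range n,
    ((θhstar i ωL * (1 - θstar i ωL)) • Γpβ + (θstar i ωL * (1 - θhstar i ωL)) • Γmβ))

/-- The (matrix-valued) variance `E[(f − E f)(f − E f)']` of a random vector. -/
def matVar {k : ℕ} {Ω : Type*} [MeasurableSpace Ω] (f : Ω → (Fin k → ℝ))
    (μ : Measure Ω) : Matrix (Fin k) (Fin k) ℝ :=
  ∫ ω, outer (f ω - ∫ x, f x ∂μ) (f ω - ∫ x, f x ∂μ) ∂μ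

lemma binom_sum0 (m : ℕ) (p q : ℝ) (h : p + q = 1) :
    ∑ j ∈ Finset.range (m+1), (m.choose j : ℝ) * p^j * q^(m-j) = 1 := by
  have h1 := add_pow p q m
  rw [h, one_pow] at h1
  rw [h1]
  exact Finset.sum_congr rfl fun j _ => by ring

lemma binom_sum1 (m : ℕ) (p q : ℝ) (h : p + q = 1) :
    ∑ j ∈ Finset.range (m+1), (j : ℝ) * ((m.choose j : ℝ) * p^j * q^(m-j))
      = (m : ℝ) * p := by
  induction m with
  | zero => simp
  | succ M _ =>
    have key : ∀ i : ℕ, ((M+1).choose (i+1) : ℝ) * ((i:ℝ)+1) = ((M:ℝ)+1) * (M.choose i : ℝ) := by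
      intro i
      have h2 : ((M+1) * M.choose i : ℕ) = ((M+1).choose (i+1) * (i+1) : ℕ) :=
        Nat.add_one_mul_choose_eq M i
      exact_mod_cast congrArg (fun x : ℕ => (x : ℝ)) h2.symm
    rw [Finset.sum_range_succ']
    push_cast
    have step : ∀ i ∈ Finset.range (M+1),
        ((i:ℝ)+1) * (((M+1).choose (i+1) : ℝ) * p^(i+1) * q^(M-i))
        = ((M:ℝ)+1) * p * ((M.choose i : ℝ) * p^i * q^(M-i)) := by
      intro i _
      calc ((i:ℝ)+1) * (((M+1).choose (i+1) : ℝ) * p^(i+1) * q^(M-i))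
          = (((M+1).choose (i+1) : ℝ) * ((i:ℝ)+1)) * p^(i+1) * q^(M-i) := by ring
        _ = (((M:ℝ)+1) * (M.choose i : ℝ)) * p^(i+1) * q^(M-i) := by rw [key i]
        _ = ((M:ℝ)+1) * p * ((M.choose i : ℝ) * p^i * q^(M-i)) := by ring
    rw [Finset.sum_congr rfl step, ← Finset.mul_sum, binom_sum0 M p q h]
    ring

lemma binom_sum2 (m : ℕ) (p q : ℝ) (h : p + q = 1) :
    ∑ j ∈ Finset.range (m+1), (j : ℝ) * ((j:ℝ) - 1) * ((m.choose j : ℝ) * p^j * q^(m-j))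
      = (m : ℝ) * ((m:ℝ) - 1) * p^2 := by
  induction m with
  | zero => simp
  | succ M _ =>
    have key : ∀ i : ℕ, ((M+1).choose (i+1) : ℝ) * ((i:ℝ)+1) = ((M:ℝ)+1) * (M.choose i : ℝ) := by
      intro i
      have h2 : ((M+1) * M.choose i : ℕ) = ((M+1).choose (i+1) * (i+1) : ℕ) :=
        Nat.add_one_mul_choose_eq M i
      exact_mod_cast congrArg (fun x : ℕ => (x : ℝ)) h2.symm
    rw [Finset.sum_range_succ']
    push_cast
    have step : ∀ i ∈ Finset.range (M+1),
        ((i:ℝ)+1) * ((i:ℝ)+1-1) * (((M+1).choose (i+1) : ℝ) * p^(i+1) * q^(M-i))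
        = ((M:ℝ)+1) * p * ((i:ℝ) * ((M.choose i : ℝ) * p^i * q^(M-i))) := by
      intro i _
      calc ((i:ℝ)+1) * ((i:ℝ)+1-1) * (((M+1).choose (i+1) : ℝ) * p^(i+1) * q^(M-i))
          = (((M+1).choose (i+1) : ℝ) * ((i:ℝ)+1)) * ((i:ℝ) * (p^(i+1) * q^(M-i))) := by ring
        _ = (((M:ℝ)+1) * (M.choose i : ℝ)) * ((i:ℝ) * (p^(i+1) * q^(M-i))) := by rw [key i]
        _ = ((M:ℝ)+1) * p * ((i:ℝ) * ((M.choose i : ℝ) * p^i * q^(M-i))) := by ring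
    rw [Finset.sum_congr rfl step, ← Finset.mul_sum, binom_sum1 M p q h]
    ring

lemma integrable_of_bound {Ω : Type*} [MeasurableSpace Ω] {μ : Measure Ω} [IsFiniteMeasure μ]
    {f : Ω → ℝ} (hf : AEStronglyMeasurable f μ) (C : ℝ) (hb : ∀ ω, |f ω| ≤ C) :
    Integrable f μ :=
  Integrable.mono' (integrable_const C) hf (Filter.Eventually.of_forall
    (by simpa [Real.norm_eq_abs] using hb))

lemma integral_finite_vals {Ω : Type*} [MeasurableSpace Ω] (μ : Measure Ω)
    [IsProbabilityMeasure μ] {m : ℕ} (hm : 0 < m) {f : Ω → ℝ} (hf : Measurable f)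
    (hs : ∀ ω, ∃ j ≤ m, f ω = (j : ℝ) / m) (φ : ℝ → ℝ) :
    ∫ ω, φ (f ω) ∂μ
      = ∑ j ∈ Finset.range (m+1), (μ {x | f x = (j:ℝ)/m}).toReal * φ ((j:ℝ)/m) := by
  have hm' : (m : ℝ) ≠ 0 := Nat.cast_ne_zero.mpr hm.ne'
  have hset : ∀ j : ℕ, MeasurableSet {x | f x = (j:ℝ)/m} :=
    fun j => hf (measurableSet_singleton _)
  have hpt : ∀ ω, φ (f ω) = ∑ j ∈ Finset.range (m+1),
      Set.indicator {x | f x = (j:ℝ)/m} (fun _ => φ ((j:ℝ)/m)) ω := by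
    intro ω
    obtain ⟨j0, hj0, hv⟩ := hs ω
    rw [Finset.sum_eq_single j0]
    · rw [Set.indicator_of_mem (by simpa [Set.mem_setOf_eq] using hv), hv]
    · intro j _ hne
      apply Set.indicator_of_notMem
      simp only [Set.mem_setOf_eq, hv]
      intro hEq
      apply hne
      field_simp at hEq
      exact_mod_cast hEq.symm
    · intro hnotin
      exact absurd (Finset.mem_range.mpr (Nat.lt_succ_of_le hj0)) hnotin
  rw [integral_congr_ae (Filter.Eventually.of_forall hpt), integral_finset_sum]
  · exact Finset.sum_congr rfl fun j _ => by
      rw [integral_indicator_const _ (hset j)]; simp [mul_comm, measureReal_def]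
  · exact fun j _ => (integrable_const _).indicator (hset j)



lemma binom_mean {Ω : Type*} [MeasurableSpace Ω] (μ : Measure Ω) [IsProbabilityMeasure μ]
    {m : ℕ} (hm : 0 < m) (p : ℝ) {f : Ω → ℝ} (hf : Measurable f)
    (hsupp : ∀ ω, ∃ j ≤ m, f ω = (j:ℝ)/m)
    (hbin : ∀ j ≤ m, (μ {x | f x = (j:ℝ)/m}).toReal
      = (m.choose j : ℝ) * p^j * (1-p)^(m-j)) :
    ∫ ω, f ω ∂μ = p := by
  have hm' : (m : ℝ) ≠ 0 := Nat.cast_ne_zero.mpr hm.ne'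
  have h1 := integral_finite_vals μ hm hf hsupp (fun x => x)
  rw [h1]
  calc ∑ j ∈ Finset.range (m+1), (μ {x | f x = (j:ℝ)/m}).toReal * ((j:ℝ)/m)
      = ∑ j ∈ Finset.range (m+1),
          (m:ℝ)⁻¹ * ((j:ℝ) * ((m.choose j : ℝ) * p^j * (1-p)^(m-j))) := by
        refine Finset.sum_congr rfl fun j hj => ?_
        rw [hbin j (Nat.lt_succ_iff.mp (Finset.mem_range.mp hj))]
        field_simp
    _ = (m:ℝ)⁻¹ * ((m:ℝ) * p) := by
        rw [← Finset.mul_sum, binom_sum1 m p (1-p) (by ring)]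
    _ = p := by field_simp

lemma binom_sq {Ω : Type*} [MeasurableSpace Ω] (μ : Measure Ω) [IsProbabilityMeasure μ]
    {m : ℕ} (hm : 0 < m) (p : ℝ) {f : Ω → ℝ} (hf : Measurable f)
    (hsupp : ∀ ω, ∃ j ≤ m, f ω = (j:ℝ)/m)
    (hbin : ∀ j ≤ m, (μ {x | f x = (j:ℝ)/m}).toReal
      = (m.choose j : ℝ) * p^j * (1-p)^(m-j)) :
    ∫ ω, (f ω)^2 ∂μ = p^2 + p*(1-p)/m := by
  have hm' : (m : ℝ) ≠ 0 := Nat.cast_ne_zero.mpr hm.ne'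
  have h1 := integral_finite_vals μ hm hf hsupp (fun x => x^2)
  rw [h1]
  calc ∑ j ∈ Finset.range (m+1), (μ {x | f x = (j:ℝ)/m}).toReal * ((j:ℝ)/m)^2
      = ∑ j ∈ Finset.range (m+1),
          ((m:ℝ)⁻¹ * (m:ℝ)⁻¹) * ((j:ℝ) * ((j:ℝ)-1) * ((m.choose j : ℝ) * p^j * (1-p)^(m-j))
            + (j:ℝ) * ((m.choose j : ℝ) * p^j * (1-p)^(m-j))) := by
        refine Finset.sum_congr rfl fun j hj => ?_
        rw [hbin j (Nat.lt_succ_iff.mp (Finset.mem_range.mp hj))]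
        field_simp
        ring
    _ = ((m:ℝ)⁻¹ * (m:ℝ)⁻¹) * ((m:ℝ) * ((m:ℝ)-1) * p^2 + (m:ℝ) * p) := by
        rw [← Finset.mul_sum, Finset.sum_add_distrib,
          binom_sum2 m p (1-p) (by ring), binom_sum1 m p (1-p) (by ring)]
    _ = p^2 + p*(1-p)/m := by field_simp; ring


/-- Under the variance-corrected coupled-label bootstrap, the bias term
`b*` satisfies `E*[b* | F̂₊*, F̂₋*] = −√n (F̂₊* Γ₊β + F̂₋* Γ₋β)` and
`Var*(E*[b* | F̂₊*, F̂₋*]) = (n F̂₊(1−F̂₊)/m) Γ₊ββ'Γ₊' + (n F̂₋(1−F̂₋)/m) Γ₋ββ'Γ₋'`. -/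
theorem statement16
    {k : ℕ} {ΩF ΩL : Type*} [MeasurableSpace ΩF] [MeasurableSpace ΩL]
    (μF : Measure ΩF) (hμF : IsProbabilityMeasure μF)
    (κF : ΩF → Measure ΩL) (hκF : ∀ ωF, IsProbabilityMeasure (κF ωF))
    (hκFm : Measurable κF)
    (n m : ℕ) (hn : 0 < n) (hm : 0 < m)
    (Fp Fm : ℝ) (hFp01 : 0 ≤ Fp ∧ Fp ≤ 1) (hFm01 : 0 ≤ Fm ∧ Fm ≤ 1)
    (Fpstar Fmstar : ΩF → ℝ)
    (hmFs : Measurable Fpstar ∧ Measurable Fmstar)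
    -- F̂₊* = V₊*/m, V₊* ~ Binomial(m, F̂₊); F̂₋* = V₋*/m, V₋* ~ Binomial(m, F̂₋); independent
    (hbinp : ∀ j ≤ m, (μF {ωF | Fpstar ωF = (j : ℝ) / (m : ℝ)}).toReal
      = (m.choose j : ℝ) * Fp ^ j * (1 - Fp) ^ (m - j))
    (hbinm : ∀ j ≤ m, (μF {ωF | Fmstar ωF = (j : ℝ) / (m : ℝ)}).toReal
      = (m.choose j : ℝ) * Fm ^ j * (1 - Fm) ^ (m - j))
    (hsupp : ∀ ωF, (∃ j ≤ m, Fpstar ωF = (j : ℝ) / (m : ℝ))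
      ∧ (∃ j ≤ m, Fmstar ωF = (j : ℝ) / (m : ℝ)))
    (hFindep : IndepFun Fpstar Fmstar μF)
    -- bootstrap label pairs
    (θstar θhstar : ℕ → ΩL → ℝ)
    (hθs01 : ∀ i ωL, θstar i ωL = 0 ∨ θstar i ωL = 1)
    (hθhs01 : ∀ i ωL, θhstar i ωL = 0 ∨ θhstar i ωL = 1)
    (hmθs : ∀ i, Measurable (θstar i)) (hmθhs : ∀ i, Measurable (θhstar i))
    -- conditional on F̂₊*, F̂₋*: for every i, θ̂*ᵢ(1−θ*ᵢ) and θ*ᵢ(1−θ̂*ᵢ) are Bernoulli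
    -- with success probabilities F̂₊* and F̂₋*, i.i.d. across i
    (hfp : ∀ ωF, ∀ i < n,
      ((κF ωF) {ωL | θhstar i ωL = 1 ∧ θstar i ωL = 0}).toReal = Fpstar ωF)
    (hfm : ∀ ωF, ∀ i < n,
      ((κF ωF) {ωL | θstar i ωL = 1 ∧ θhstar i ωL = 0}).toReal = Fmstar ωF)
    (hpairindep : ∀ ωF, iIndepFun
      (fun i ωL => (θstar i ωL, θhstar i ωL)) (κF ωF))
    -- Γ₊ = Q⁻¹E[D₊ᵢ], Γ₋ = Q⁻¹E[D₋ᵢ] with Q invertible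
    (Q EDp EDm Γp Γm : Matrix (Fin k) (Fin k) ℝ) (β : Fin k → ℝ)
    (hQinv : IsUnit Q.det) (hΓp : Γp = Q⁻¹ * EDp) (hΓm : Γm = Q⁻¹ * EDm) :
    -- E*[b* | F̂₊*, F̂₋*] = −√n (F̂₊* Γ₊β + F̂₋* Γ₋β)
    (∀ ωF, (∫ ωL, bstar n (Γp.mulVec β) (Γm.mulVec β) θstar θhstar ωL ∂(κF ωF))
      = -(Real.sqrt n • (Fpstar ωF • Γp.mulVec β + Fmstar ωF • Γm.mulVec β)))
    -- Var*(E*[b* | F̂₊*, F̂₋*])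
    ∧ matVar (fun ωF => ∫ ωL, bstar n (Γp.mulVec β) (Γm.mulVec β) θstar θhstar ωL ∂(κF ωF)) μF
      = ((n : ℝ) * Fp * (1 - Fp) / (m : ℝ)) • outer (Γp.mulVec β) (Γp.mulVec β)
        + ((n : ℝ) * Fm * (1 - Fm) / (m : ℝ)) • outer (Γm.mulVec β) (Γm.mulVec β) := by

  obtain ⟨hFp0, hFp1⟩ := hFp01
  obtain ⟨hFm0, hFm1⟩ := hFm01
  obtain ⟨hmFp, hmFm⟩ := hmFs
  have hn' : (0:ℝ) < n := by exact_mod_cast hn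
  have hm' : (m : ℝ) ≠ 0 := Nat.cast_ne_zero.mpr hm.ne'
  have hsqrt : Real.sqrt n ≠ 0 := ne_of_gt (Real.sqrt_pos.mpr hn')
  set u := Γp.mulVec β with hu
  set v := Γm.mulVec β with hv
  have part1 : ∀ ωF, (∫ ωL, bstar n u v θstar θhstar ωL ∂(κF ωF))
      = -(Real.sqrt n • (Fpstar ωF • u + Fmstar ωF • v)) := by
    intro ωF
    haveI := hκF ωF
    have hAmeas : ∀ i, Measurable (fun ωL => θhstar i ωL * (1 - θstar i ωL)) :=
      fun i => (hmθhs i).mul (measurable_const.sub (hmθs i))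
    have hBmeas : ∀ i, Measurable (fun ωL => θstar i ωL * (1 - θhstar i ωL)) :=
      fun i => (hmθs i).mul (measurable_const.sub (hmθhs i))
    have hAint : ∀ i, Integrable (fun ωL => θhstar i ωL * (1 - θstar i ωL)) (κF ωF) := by
      intro i
      refine integrable_of_bound (hAmeas i).aestronglyMeasurable 1 ?_
      intro ωL
      rcases hθhs01 i ωL with h|h <;> rcases hθs01 i ωL with h'|h' <;> simp [h, h']
    have hBint : ∀ i, Integrable (fun ωL => θstar i ωL * (1 - θhstar i ωL)) (κF ωF) := by
      intro i
      refine integrable_of_bound (hBmeas i).aestronglyMeasurable 1 ?_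
      intro ωL
      rcases hθhs01 i ωL with h|h <;> rcases hθs01 i ωL with h'|h' <;> simp [h, h']
    have hAval : ∀ i < n, ∫ ωL, θhstar i ωL * (1 - θstar i ωL) ∂(κF ωF) = Fpstar ωF := by
      intro i hi
      have hSm : MeasurableSet {ωL | θhstar i ωL = 1 ∧ θstar i ωL = 0} := by
        have hEq : {ωL | θhstar i ωL = 1 ∧ θstar i ωL = 0}
            = (θhstar i) ⁻¹' {1} ∩ (θstar i) ⁻¹' {0} := rfl
        rw [hEq]
        exact ((hmθhs i) (measurableSet_singleton _)).inter
          ((hmθs i) (measurableSet_singleton _))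
      have hind : (fun ωL => θhstar i ωL * (1 - θstar i ωL))
          = Set.indicator {ωL | θhstar i ωL = 1 ∧ θstar i ωL = 0} (fun _ => (1:ℝ)) := by
        funext ωL
        rcases hθhs01 i ωL with h|h <;> rcases hθs01 i ωL with h'|h' <;>
          simp [Set.indicator, h, h']
      rw [hind, integral_indicator_const _ hSm, smul_eq_mul, mul_one, measureReal_def, hfp ωF i hi]
    have hBval : ∀ i < n, ∫ ωL, θstar i ωL * (1 - θhstar i ωL) ∂(κF ωF) = Fmstar ωF := by
      intro i hi
      have hSm : MeasurableSet {ωL | θstar i ωL = 1 ∧ θhstar i ωL = 0} := by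
        have hEq : {ωL | θstar i ωL = 1 ∧ θhstar i ωL = 0}
            = (θstar i) ⁻¹' {1} ∩ (θhstar i) ⁻¹' {0} := rfl
        rw [hEq]
        exact ((hmθs i) (measurableSet_singleton _)).inter
          ((hmθhs i) (measurableSet_singleton _))
      have hind : (fun ωL => θstar i ωL * (1 - θhstar i ωL))
          = Set.indicator {ωL | θstar i ωL = 1 ∧ θhstar i ωL = 0} (fun _ => (1:ℝ)) := by
        funext ωL
        rcases hθhs01 i ωL with h|h <;> rcases hθs01 i ωL with h'|h' <;>
          simp [Set.indicator, h, h']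
      rw [hind, integral_indicator_const _ hSm, smul_eq_mul, mul_one, measureReal_def, hfm ωF i hi]
    have hterm : ∀ i, Integrable (fun ωL =>
        (θhstar i ωL * (1 - θstar i ωL)) • u + (θstar i ωL * (1 - θhstar i ωL)) • v)
        (κF ωF) := fun i => ((hAint i).smul_const u).add ((hBint i).smul_const v)
    calc ∫ ωL, bstar n u v θstar θhstar ωL ∂(κF ωF)
        = ∫ ωL, -((Real.sqrt n)⁻¹ • ∑ i ∈ Finset.range n,
            ((θhstar i ωL * (1 - θstar i ωL)) • u
              + (θstar i ωL * (1 - θhstar i ωL)) • v)) ∂(κF ωF) := rfl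
      _ = -((Real.sqrt n)⁻¹ • ∫ ωL, ∑ i ∈ Finset.range n,
            ((θhstar i ωL * (1 - θstar i ωL)) • u
              + (θstar i ωL * (1 - θhstar i ωL)) • v) ∂(κF ωF)) := by
          rw [integral_neg, integral_smul]
      _ = -((Real.sqrt n)⁻¹ • ∑ i ∈ Finset.range n,
            ∫ ωL, ((θhstar i ωL * (1 - θstar i ωL)) • u
              + (θstar i ωL * (1 - θhstar i ωL)) • v) ∂(κF ωF)) := by
          rw [integral_finset_sum _ (fun i _ => hterm i)]
      _ = -((Real.sqrt n)⁻¹ • ∑ i ∈ Finset.range n,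
            (Fpstar ωF • u + Fmstar ωF • v)) := by
          congr 2
          refine Finset.sum_congr rfl fun i hi => ?_
          have hi' : i < n := Finset.mem_range.mp hi
          rw [integral_add ((hAint i).smul_const u) ((hBint i).smul_const v),
            integral_smul_const, integral_smul_const, hAval i hi', hBval i hi']
      _ = -(Real.sqrt n • (Fpstar ωF • u + Fmstar ωF • v)) := by
          rw [Finset.sum_const, Finset.card_range, ← Nat.cast_smul_eq_nsmul ℝ, smul_smul]
          congr 2
          rw [inv_mul_eq_div, div_eq_iff hsqrt, Real.mul_self_sqrt hn'.le]
  refine ⟨part1, ?_⟩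
  have hfuneq : (fun ωF => ∫ ωL, bstar n u v θstar θhstar ωL ∂(κF ωF))
      = fun ωF => -(Real.sqrt n • (Fpstar ωF • u + Fmstar ωF • v)) := funext part1
  rw [hfuneq]
  letI : CompleteSpace (Matrix (Fin k) (Fin k) ℝ) :=
    inferInstanceAs (CompleteSpace (Fin k → Fin k → ℝ))
  letI : ESeminormedAddMonoid (Matrix (Fin k) (Fin k) ℝ) :=
    inferInstanceAs (ESeminormedAddMonoid (Fin k → Fin k → ℝ))
  -- moments of Fpstar, Fmstar
  have hEp : ∫ ω, Fpstar ω ∂μF = Fp :=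
    binom_mean μF hm Fp hmFp (fun ω => (hsupp ω).1) hbinp
  have hEm : ∫ ω, Fmstar ω ∂μF = Fm :=
    binom_mean μF hm Fm hmFm (fun ω => (hsupp ω).2) hbinm
  have hEp2 : ∫ ω, (Fpstar ω)^2 ∂μF = Fp^2 + Fp*(1-Fp)/m :=
    binom_sq μF hm Fp hmFp (fun ω => (hsupp ω).1) hbinp
  have hEm2 : ∫ ω, (Fmstar ω)^2 ∂μF = Fm^2 + Fm*(1-Fm)/m :=
    binom_sq μF hm Fm hmFm (fun ω => (hsupp ω).2) hbinm
  have hbddP : ∀ ω, |Fpstar ω| ≤ 1 := by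
    intro ω
    obtain ⟨j, hj, hvj⟩ := (hsupp ω).1
    rw [hvj, abs_of_nonneg (by positivity)]
    rw [div_le_one (by exact_mod_cast hm)]
    exact_mod_cast hj
  have hbddM : ∀ ω, |Fmstar ω| ≤ 1 := by
    intro ω
    obtain ⟨j, hj, hvj⟩ := (hsupp ω).2
    rw [hvj, abs_of_nonneg (by positivity)]
    rw [div_le_one (by exact_mod_cast hm)]
    exact_mod_cast hj
  have hintP : Integrable Fpstar μF :=
    integrable_of_bound hmFp.aestronglyMeasurable 1 hbddP
  have hintM : Integrable Fmstar μF :=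
    integrable_of_bound hmFm.aestronglyMeasurable 1 hbddM
  have hintP2 : Integrable (fun ω => (Fpstar ω)^2) μF := by
    refine integrable_of_bound (hmFp.pow_const 2).aestronglyMeasurable 1 ?_
    intro ω
    rw [abs_pow]
    calc |Fpstar ω|^2 ≤ 1^2 := pow_le_pow_left₀ (abs_nonneg _) (hbddP ω) 2
      _ = 1 := one_pow 2
  have hintM2 : Integrable (fun ω => (Fmstar ω)^2) μF := by
    refine integrable_of_bound (hmFm.pow_const 2).aestronglyMeasurable 1 ?_
    intro ω
    rw [abs_pow]
    calc |Fmstar ω|^2 ≤ 1^2 := pow_le_pow_left₀ (abs_nonneg _) (hbddM ω) 2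
      _ = 1 := one_pow 2
  have hintPM : Integrable (fun ω => Fpstar ω * Fmstar ω) μF := by
    refine integrable_of_bound (hmFp.mul hmFm).aestronglyMeasurable 1 ?_
    intro ω
    rw [abs_mul]
    calc |Fpstar ω| * |Fmstar ω| ≤ 1 * 1 :=
        mul_le_mul (hbddP ω) (hbddM ω) (abs_nonneg _) zero_le_one
      _ = 1 := one_mul 1
  have hcross : ∫ ω, Fpstar ω * Fmstar ω ∂μF = Fp * Fm := by
    have h := hFindep.integral_mul_eq_mul_integral hmFp.aestronglyMeasurable hmFm.aestronglyMeasurable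
    calc ∫ ω, Fpstar ω * Fmstar ω ∂μF = ∫ ω, (Fpstar * Fmstar) ω ∂μF := rfl
      _ = (∫ ω, Fpstar ω ∂μF) * ∫ ω, Fmstar ω ∂μF := h
      _ = Fp * Fm := by rw [hEp, hEm]
  -- expectation of the conditional mean
  have hEG : (∫ ω, -(Real.sqrt n • (Fpstar ω • u + Fmstar ω • v)) ∂μF)
      = -(Real.sqrt n • (Fp • u + Fm • v)) := by
    rw [integral_neg, integral_smul,
      integral_add (hintP.smul_const u) (hintM.smul_const v),
      integral_smul_const, integral_smul_const, hEp, hEm]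
  unfold matVar
  rw [hEG]
  have hdecomp : ∀ ω : ΩF,
      outer (-(Real.sqrt n • (Fpstar ω • u + Fmstar ω • v))
          - -(Real.sqrt n • (Fp • u + Fm • v)))
        (-(Real.sqrt n • (Fpstar ω • u + Fmstar ω • v))
          - -(Real.sqrt n • (Fp • u + Fm • v)))
      = ((n:ℝ) * ((Fpstar ω - Fp)^2)) • outer u u
        + ((n:ℝ) * ((Fpstar ω - Fp) * (Fmstar ω - Fm))) • outer u v
        + ((n:ℝ) * ((Fpstar ω - Fp) * (Fmstar ω - Fm))) • outer v u
        + ((n:ℝ) * ((Fmstar ω - Fm)^2)) • outer v v := by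
    intro ω
    have hnn : Real.sqrt n * Real.sqrt n = (n:ℝ) := Real.mul_self_sqrt hn'.le
    funext a b
    simp only [outer, Matrix.of_apply, Matrix.add_apply, Matrix.smul_apply,
      Pi.add_apply, Pi.smul_apply, Pi.sub_apply, Pi.neg_apply, smul_eq_mul]
    generalize hs : Real.sqrt (n:ℝ) = s at hnn ⊢
    rw [← hnn]
    ring
  have hintA : Integrable (fun ω => ((n:ℝ) * ((Fpstar ω - Fp)^2)) • outer u u) μF := by
    refine Integrable.smul_const ?_ _
    refine integrable_of_bound
      ((measurable_const.mul ((hmFp.sub measurable_const).pow_const 2)).aestronglyMeasurable)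
      ((n:ℝ) * 4) ?_
    intro ω
    rw [abs_mul, abs_of_nonneg hn'.le]
    refine mul_le_mul_of_nonneg_left ?_ hn'.le
    rw [abs_pow]
    have h2 : |Fpstar ω - Fp| ≤ 2 := by
      calc |Fpstar ω - Fp| ≤ |Fpstar ω| + |Fp| := abs_sub _ _
        _ ≤ 1 + 1 := add_le_add (hbddP ω) (abs_le.mpr ⟨by linarith, hFp1⟩)
        _ = 2 := by norm_num
    calc |Fpstar ω - Fp|^2 ≤ 2^2 := pow_le_pow_left₀ (abs_nonneg _) h2 2
      _ = 4 := by norm_num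
  have hintB : Integrable
      (fun ω => ((n:ℝ) * ((Fpstar ω - Fp) * (Fmstar ω - Fm))) • outer u v) μF := by
    refine Integrable.smul_const ?_ _
    refine integrable_of_bound
      ((measurable_const.mul ((hmFp.sub measurable_const).mul
        (hmFm.sub measurable_const))).aestronglyMeasurable) ((n:ℝ) * 4) ?_
    intro ω
    rw [abs_mul, abs_of_nonneg hn'.le]
    refine mul_le_mul_of_nonneg_left ?_ hn'.le
    rw [abs_mul]
    have h2 : |Fpstar ω - Fp| ≤ 2 := by
      calc |Fpstar ω - Fp| ≤ |Fpstar ω| + |Fp| := abs_sub _ _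
        _ ≤ 1 + 1 := add_le_add (hbddP ω) (abs_le.mpr ⟨by linarith, hFp1⟩)
        _ = 2 := by norm_num
    have h3 : |Fmstar ω - Fm| ≤ 2 := by
      calc |Fmstar ω - Fm| ≤ |Fmstar ω| + |Fm| := abs_sub _ _
        _ ≤ 1 + 1 := add_le_add (hbddM ω) (abs_le.mpr ⟨by linarith, hFm1⟩)
        _ = 2 := by norm_num
    calc |Fpstar ω - Fp| * |Fmstar ω - Fm| ≤ 2 * 2 :=
        mul_le_mul h2 h3 (abs_nonneg _) (by norm_num)
      _ = 4 := by norm_num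
  have hscal1 : Integrable (fun ω => ((n:ℝ) * ((Fpstar ω - Fp) * (Fmstar ω - Fm)))) μF := by
    refine integrable_of_bound
      ((measurable_const.mul ((hmFp.sub measurable_const).mul
        (hmFm.sub measurable_const))).aestronglyMeasurable) ((n:ℝ) * 4) ?_
    intro ω
    rw [abs_mul, abs_of_nonneg hn'.le]
    refine mul_le_mul_of_nonneg_left ?_ hn'.le
    rw [abs_mul]
    have h2 : |Fpstar ω - Fp| ≤ 2 := by
      calc |Fpstar ω - Fp| ≤ |Fpstar ω| + |Fp| := abs_sub _ _
        _ ≤ 1 + 1 := add_le_add (hbddP ω) (abs_le.mpr ⟨by linarith, hFp1⟩)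
        _ = 2 := by norm_num
    have h3 : |Fmstar ω - Fm| ≤ 2 := by
      calc |Fmstar ω - Fm| ≤ |Fmstar ω| + |Fm| := abs_sub _ _
        _ ≤ 1 + 1 := add_le_add (hbddM ω) (abs_le.mpr ⟨by linarith, hFm1⟩)
        _ = 2 := by norm_num
    calc |Fpstar ω - Fp| * |Fmstar ω - Fm| ≤ 2 * 2 :=
        mul_le_mul h2 h3 (abs_nonneg _) (by norm_num)
      _ = 4 := by norm_num
  have hintB' : Integrable
      (fun ω => ((n:ℝ) * ((Fpstar ω - Fp) * (Fmstar ω - Fm))) • outer v u) μF :=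
    hscal1.smul_const _
  have hintD : Integrable (fun ω => ((n:ℝ) * ((Fmstar ω - Fm)^2)) • outer v v) μF := by
    refine Integrable.smul_const ?_ _
    refine integrable_of_bound
      ((measurable_const.mul ((hmFm.sub measurable_const).pow_const 2)).aestronglyMeasurable)
      ((n:ℝ) * 4) ?_
    intro ω
    rw [abs_mul, abs_of_nonneg hn'.le]
    refine mul_le_mul_of_nonneg_left ?_ hn'.le
    rw [abs_pow]
    have h2 : |Fmstar ω - Fm| ≤ 2 := by
      calc |Fmstar ω - Fm| ≤ |Fmstar ω| + |Fm| := abs_sub _ _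
        _ ≤ 1 + 1 := add_le_add (hbddM ω) (abs_le.mpr ⟨by linarith, hFm1⟩)
        _ = 2 := by norm_num
    calc |Fmstar ω - Fm|^2 ≤ 2^2 := pow_le_pow_left₀ (abs_nonneg _) h2 2
      _ = 4 := by norm_num
  have hVp : ∫ ω, (n:ℝ) * ((Fpstar ω - Fp)^2) ∂μF = (n:ℝ) * Fp * (1-Fp) / m := by
    rw [integral_const_mul]
    have hexp : ∀ ω : ΩF, (Fpstar ω - Fp)^2
        = (Fpstar ω)^2 - 2*Fp*Fpstar ω + Fp^2 := fun ω => by ring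
    have i2 : Integrable (fun ω => 2*Fp*Fpstar ω) μF := by exact hintP.const_mul _
    have i1 : Integrable (fun ω => (Fpstar ω)^2 - 2*Fp*Fpstar ω) μF := by exact hintP2.sub i2
    simp_rw [hexp]
    rw [integral_add i1 (integrable_const _), integral_sub hintP2 i2,
      integral_const_mul, hEp, hEp2, integral_const, probReal_univ]
    simp only [ENNReal.toReal_one, smul_eq_mul, one_mul]
    field_simp
    ring
  have hVm : ∫ ω, (n:ℝ) * ((Fmstar ω - Fm)^2) ∂μF = (n:ℝ) * Fm * (1-Fm) / m := by
    rw [integral_const_mul]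
    have hexp : ∀ ω : ΩF, (Fmstar ω - Fm)^2
        = (Fmstar ω)^2 - 2*Fm*Fmstar ω + Fm^2 := fun ω => by ring
    have i2 : Integrable (fun ω => 2*Fm*Fmstar ω) μF := by exact hintM.const_mul _
    have i1 : Integrable (fun ω => (Fmstar ω)^2 - 2*Fm*Fmstar ω) μF := by exact hintM2.sub i2
    simp_rw [hexp]
    rw [integral_add i1 (integrable_const _), integral_sub hintM2 i2,
      integral_const_mul, hEm, hEm2, integral_const, probReal_univ]
    simp only [ENNReal.toReal_one, smul_eq_mul, one_mul]
    field_simp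
    ring
  have hC : ∫ ω, (n:ℝ) * ((Fpstar ω - Fp) * (Fmstar ω - Fm)) ∂μF = 0 := by
    rw [integral_const_mul]
    have hexp : ∀ ω : ΩF, (Fpstar ω - Fp) * (Fmstar ω - Fm)
        = Fpstar ω * Fmstar ω - Fm * Fpstar ω - Fp * Fmstar ω + Fp*Fm := fun ω => by ring
    simp_rw [hexp]
    have j1 : Integrable (fun ω => Fm * Fpstar ω) μF := by exact hintP.const_mul _
    have j2 : Integrable (fun ω => Fp * Fmstar ω) μF := by exact hintM.const_mul _
    have j3 : Integrable (fun ω => Fpstar ω * Fmstar ω - Fm * Fpstar ω) μF := by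
      exact hintPM.sub j1
    have j4 : Integrable (fun ω => Fpstar ω * Fmstar ω - Fm * Fpstar ω - Fp * Fmstar ω) μF := by
      exact j3.sub j2
    rw [integral_add j4 (integrable_const _), integral_sub j3 j2, integral_sub hintPM j1,
      integral_const_mul, integral_const_mul, hcross, hEp, hEm, integral_const, probReal_univ]
    simp only [ENNReal.toReal_one, smul_eq_mul, one_mul]
    ring
  have k1 : Integrable (fun ω => ((n:ℝ) * ((Fpstar ω - Fp)^2)) • outer u u
      + ((n:ℝ) * ((Fpstar ω - Fp) * (Fmstar ω - Fm))) • outer u v) μF := by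
    exact hintA.add hintB
  have k2 : Integrable (fun ω => ((n:ℝ) * ((Fpstar ω - Fp)^2)) • outer u u
      + ((n:ℝ) * ((Fpstar ω - Fp) * (Fmstar ω - Fm))) • outer u v
      + ((n:ℝ) * ((Fpstar ω - Fp) * (Fmstar ω - Fm))) • outer v u) μF := by
    exact k1.add hintB'
  rw [integral_congr_ae (Filter.Eventually.of_forall hdecomp),
    integral_add k2 hintD, integral_add k1 hintB', integral_add hintA hintB,
    integral_smul_const, integral_smul_const, integral_smul_const, integral_smul_const,
    hVp, hVm, hC, zero_smul, add_zero, zero_smul, add_zero]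
end
end

section
/- Under the variance-corrected coupled-label bootstrap, the conditional bootstrap variance of the bias term satisfies the exact identity Var*(b* | F̂₊*, F̂₋*) = F̂₊*(1−F̂₊*) Γ₊ββ'Γ₊' + F̂₋*(1−F̂₋*) Γ₋ββ'Γ₋' − F̂₊*F̂₋* (Γ₊ββ'Γ₋' + Γ₋ββ'Γ₊'), and hence E*[Var*(b* | F̂₊*, F̂₋*)] = (1 − 1/m)(F̂₊(1−F̂₊) Γ₊ββ'Γ₊' + F̂₋(1−F̂₋) Γ₋ββ'Γ₋') − F̂₊F̂₋ (Γ₊ββ'Γ₋' + Γ₋ββ'Γ₊'). -/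
open MeasureTheory ProbabilityTheory Filter Finset Topology

noncomputable section

attribute [local instance] Matrix.normedAddCommGroup Matrix.normedSpace

section Helpers

instance matCENorm {k : ℕ} : ContinuousENorm (Matrix (Fin k) (Fin k) ℝ) :=
  inferInstanceAs (ContinuousENorm (Fin k → Fin k → ℝ))

lemma keyChoose (n i : ℕ) : ((i : ℝ) + 1) * ((n+1).choose (i+1) : ℝ) = ((n:ℝ) + 1) * (n.choose i : ℝ) := by
  have h := Nat.add_one_mul_choose_eq n i
  have h2 : ((n+1) * n.choose i : ℕ) = ((n+1).choose (i+1) * (i+1) : ℕ) := by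
    simpa [Nat.succ_eq_add_one] using h
  have := congrArg (Nat.cast (R := ℝ)) h2
  push_cast at this
  linarith

lemma binom_pow (n : ℕ) (p q : ℝ) :
    ∑ i ∈ Finset.range (n+1), (n.choose i : ℝ) * p ^ i * q ^ (n - i) = (p + q) ^ n := by
  rw [add_pow]
  exact Finset.sum_congr rfl (fun i _ => by ring)

lemma sumA (n : ℕ) (p q : ℝ) :
    ∑ j ∈ Finset.range (n+1), (j : ℝ) * (n.choose j : ℝ) * p ^ j * q ^ (n - j)
      = (n : ℝ) * p * (p + q) ^ (n - 1) := by
  cases n with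
  | zero => simp
  | succ n =>
    rw [Finset.sum_range_succ']
    simp only [Nat.cast_zero, zero_mul, add_zero]
    have hcong : ∀ i ∈ Finset.range (n+1), (((i+1 : ℕ)):ℝ) * (((n+1).choose (i+1) : ℕ) : ℝ) * p ^ (i+1) * q ^ (n + 1 - (i+1))
        = ((n:ℝ)+1) * p * ((n.choose i : ℝ) * p ^ i * q ^ (n - i)) := by
      intro i _
      have hk : (((i+1 : ℕ)):ℝ) * (((n+1).choose (i+1) : ℕ) : ℝ) = ((n:ℝ) + 1) * (n.choose i : ℝ) := by
        push_cast
        exact keyChoose n i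
      rw [Nat.add_sub_add_right, hk, pow_succ]
      ring
    rw [Finset.sum_congr rfl hcong, ← Finset.mul_sum, binom_pow]
    push_cast
    simp

lemma sumB (n : ℕ) (p q : ℝ) :
    ∑ j ∈ Finset.range (n+1), (j : ℝ) * ((j:ℝ) - 1) * (n.choose j : ℝ) * p ^ j * q ^ (n - j)
      = (n : ℝ) * ((n:ℝ) - 1) * p ^ 2 * (p + q) ^ (n - 2) := by
  cases n with
  | zero => simp
  | succ n =>
    rw [Finset.sum_range_succ']
    simp only [Nat.cast_zero, zero_mul, add_zero]
    have hcong : ∀ i ∈ Finset.range (n+1), (((i+1 : ℕ)):ℝ) * (((((i+1:ℕ)):ℝ)) - 1) * (((n+1).choose (i+1) : ℕ) : ℝ) * p ^ (i+1) * q ^ (n + 1 - (i+1))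
        = ((n:ℝ)+1) * p * ((i:ℝ) * (n.choose i : ℝ) * p ^ i * q ^ (n - i)) := by
      intro i _
      have hk : (((i+1 : ℕ)):ℝ) * (((n+1).choose (i+1) : ℕ) : ℝ) = ((n:ℝ) + 1) * (n.choose i : ℝ) := by
        push_cast
        exact keyChoose n i
      rw [Nat.add_sub_add_right, pow_succ]
      push_cast
      push_cast at hk
      linear_combination ((i:ℝ) * p^i * p * q^(n-i)) * hk
    rw [Finset.sum_congr rfl hcong, ← Finset.mul_sum, sumA]
    push_cast
    ring

lemma simple_moment {ΩF : Type*} [MeasurableSpace ΩF] (μF : Measure ΩF)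
    [IsProbabilityMeasure μF] {m : ℕ} (hm : 0 < m) {F : ΩF → ℝ} (hF : Measurable F)
    (hsupp : ∀ ω, ∃ j ≤ m, F ω = (j : ℝ) / m) (g : ℝ → ℝ) :
    ∫ ω, g (F ω) ∂μF
      = ∑ j ∈ Finset.range (m+1), g ((j:ℝ)/m) * (μF {ω | F ω = (j:ℝ)/m}).toReal := by
  have hmR : (m : ℝ) ≠ 0 := Nat.cast_ne_zero.mpr hm.ne'
  have hSmeas : ∀ j : ℕ, MeasurableSet {ω | F ω = (j:ℝ)/m} :=
    fun j => hF (measurableSet_singleton ((j:ℝ)/m))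
  have hrep : ∀ ω, g (F ω) = ∑ j ∈ Finset.range (m+1),
      ({ω | F ω = (j:ℝ)/m}).indicator (fun _ => g ((j:ℝ)/m)) ω := by
    intro ω
    obtain ⟨j0, hj0, hval⟩ := hsupp ω
    rw [Finset.sum_eq_single j0]
    · rw [Set.indicator_of_mem (by exact hval), hval]
    · intro b _ hb
      apply Set.indicator_of_notMem
      simp only [Set.mem_setOf_eq, hval]
      intro hEq
      apply hb
      have h2 : (j0:ℝ) = (b:ℝ) := by
        field_simp at hEq
        exact_mod_cast hEq
      exact (Nat.cast_injective h2).symm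
    · intro h
      exact absurd (Finset.mem_range.mpr (Nat.lt_succ_of_le hj0)) h
  rw [integral_congr_ae (Filter.Eventually.of_forall hrep),
    integral_finset_sum _ (fun j _ => (integrable_const _).indicator (hSmeas j))]
  refine Finset.sum_congr rfl fun j _ => ?_
  rw [integral_indicator_const _ (hSmeas j), smul_eq_mul, mul_comm, measureReal_def]

lemma moment_id {ΩF : Type*} [MeasurableSpace ΩF] (μF : Measure ΩF)
    [IsProbabilityMeasure μF] {m : ℕ} (hm : 0 < m) {F : ΩF → ℝ} (hF : Measurable F)
    (hsupp : ∀ ω, ∃ j ≤ m, F ω = (j : ℝ) / m) {p : ℝ}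
    (hbin : ∀ j ≤ m, (μF {ω | F ω = (j : ℝ) / m}).toReal
      = (m.choose j : ℝ) * p ^ j * (1 - p) ^ (m - j)) :
    ∫ ω, F ω ∂μF = p := by
  have hmR : (m : ℝ) ≠ 0 := Nat.cast_ne_zero.mpr hm.ne'
  have := simple_moment μF hm hF hsupp (fun x => x)
  rw [this]
  have hcong : ∀ j ∈ Finset.range (m+1), ((j:ℝ)/m) * (μF {ω | F ω = (j:ℝ)/m}).toReal
      = (1/m) * ((j:ℝ) * (m.choose j : ℝ) * p ^ j * (1-p) ^ (m - j)) := by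
    intro j hj
    rw [hbin j (Nat.lt_succ_iff.mp (Finset.mem_range.mp hj))]
    ring
  rw [Finset.sum_congr rfl hcong, ← Finset.mul_sum, sumA]
  field_simp
  simp

lemma moment_var {ΩF : Type*} [MeasurableSpace ΩF] (μF : Measure ΩF)
    [IsProbabilityMeasure μF] {m : ℕ} (hm : 0 < m) {F : ΩF → ℝ} (hF : Measurable F)
    (hsupp : ∀ ω, ∃ j ≤ m, F ω = (j : ℝ) / m) {p : ℝ}
    (hbin : ∀ j ≤ m, (μF {ω | F ω = (j : ℝ) / m}).toReal
      = (m.choose j : ℝ) * p ^ j * (1 - p) ^ (m - j)) :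
    ∫ ω, F ω * (1 - F ω) ∂μF = (1 - 1/(m:ℝ)) * (p * (1 - p)) := by
  have hmR : (m : ℝ) ≠ 0 := Nat.cast_ne_zero.mpr hm.ne'
  have := simple_moment μF hm hF hsupp (fun x => x * (1 - x))
  rw [this]
  have hcong : ∀ j ∈ Finset.range (m+1), ((j:ℝ)/m) * (1 - (j:ℝ)/m) * (μF {ω | F ω = (j:ℝ)/m}).toReal
      = (1/m - 1/(m:ℝ)^2) * ((j:ℝ) * (m.choose j : ℝ) * p ^ j * (1-p) ^ (m - j))
        - (1/(m:ℝ)^2) * ((j:ℝ) * ((j:ℝ) - 1) * (m.choose j : ℝ) * p ^ j * (1-p) ^ (m - j)) := by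
    intro j hj
    rw [hbin j (Nat.lt_succ_iff.mp (Finset.mem_range.mp hj))]
    field_simp
    ring
  rw [Finset.sum_congr rfl hcong, Finset.sum_sub_distrib, ← Finset.mul_sum, ← Finset.mul_sum,
    sumA, sumB]
  have h1 : p + (1 - p) = 1 := by ring
  rw [h1, one_pow, one_pow]
  field_simp

lemma outer_neg_smul {ι κ : Type*} (c : ℝ) (x : ι → ℝ) (y : κ → ℝ) :
    outer (-(c • x)) (-(c • y)) = (c * c) • outer x y := by
  ext a b
  simp only [outer, Matrix.of_apply, Matrix.smul_apply, Pi.neg_apply, Pi.smul_apply,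
    smul_eq_mul]
  ring

lemma outer_sum_sum {ι κ α : Type*} (s : Finset α) (f : α → ι → ℝ) (g : α → κ → ℝ) :
    outer (∑ i ∈ s, f i) (∑ j ∈ s, g j) = ∑ i ∈ s, ∑ j ∈ s, outer (f i) (g j) := by
  ext a b
  simp only [outer, Matrix.of_apply, Matrix.sum_apply, Finset.sum_apply]
  rw [Finset.sum_mul_sum]

lemma outer_expand {ι κ : Type*} (a b a' b' : ℝ) (u v : ι → ℝ) (u' v' : κ → ℝ) :
    outer (a • u + b • v) (a' • u' + b' • v')
      = (a * a') • outer u u' + (a * b') • outer u v' + (b * a') • outer v u'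
        + (b * b') • outer v v' := by
  ext x y
  simp only [outer, Matrix.of_apply, Matrix.add_apply, Matrix.smul_apply, Pi.add_apply,
    Pi.smul_apply, smul_eq_mul]
  ring

end Helpers
/-- Under the variance-corrected coupled-label bootstrap, the conditional
bootstrap variance of the bias term satisfies
`Var*(b* | F̂₊*, F̂₋*) = F̂₊*(1−F̂₊*) Γ₊ββ'Γ₊' + F̂₋*(1−F̂₋*) Γ₋ββ'Γ₋'
  − F̂₊*F̂₋* (Γ₊ββ'Γ₋' + Γ₋ββ'Γ₊')`, and hence
`E*[Var*(b* | F̂₊*, F̂₋*)] = (1 − 1/m)(F̂₊(1−F̂₊) Γ₊ββ'Γ₊' + F̂₋(1−F̂₋) Γ₋ββ'Γ₋')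
  − F̂₊F̂₋ (Γ₊ββ'Γ₋' + Γ₋ββ'Γ₊')`. -/
theorem statement17
    {k : ℕ} {ΩF ΩL : Type*} [MeasurableSpace ΩF] [MeasurableSpace ΩL]
    (μF : Measure ΩF) (hμF : IsProbabilityMeasure μF)
    (κF : ΩF → Measure ΩL) (hκF : ∀ ωF, IsProbabilityMeasure (κF ωF))
    (hκFm : Measurable κF)
    (n m : ℕ) (hn : 0 < n) (hm : 0 < m)
    (Fp Fm : ℝ) (hFp01 : 0 ≤ Fp ∧ Fp ≤ 1) (hFm01 : 0 ≤ Fm ∧ Fm ≤ 1)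
    (Fpstar Fmstar : ΩF → ℝ)
    (hmFs : Measurable Fpstar ∧ Measurable Fmstar)
    -- F̂₊* = V₊*/m, V₊* ~ Binomial(m, F̂₊); F̂₋* = V₋*/m, V₋* ~ Binomial(m, F̂₋); independent
    (hbinp : ∀ j ≤ m, (μF {ωF | Fpstar ωF = (j : ℝ) / (m : ℝ)}).toReal
      = (m.choose j : ℝ) * Fp ^ j * (1 - Fp) ^ (m - j))
    (hbinm : ∀ j ≤ m, (μF {ωF | Fmstar ωF = (j : ℝ) / (m : ℝ)}).toReal
      = (m.choose j : ℝ) * Fm ^ j * (1 - Fm) ^ (m - j))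
    (hsupp : ∀ ωF, (∃ j ≤ m, Fpstar ωF = (j : ℝ) / (m : ℝ))
      ∧ (∃ j ≤ m, Fmstar ωF = (j : ℝ) / (m : ℝ)))
    (hFindep : IndepFun Fpstar Fmstar μF)
    -- bootstrap label pairs
    (θstar θhstar : ℕ → ΩL → ℝ)
    (hθs01 : ∀ i ωL, θstar i ωL = 0 ∨ θstar i ωL = 1)
    (hθhs01 : ∀ i ωL, θhstar i ωL = 0 ∨ θhstar i ωL = 1)
    (hmθs : ∀ i, Measurable (θstar i)) (hmθhs : ∀ i, Measurable (θhstar i))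
    -- conditional on F̂₊*, F̂₋*: for every i, θ̂*ᵢ(1−θ*ᵢ) and θ*ᵢ(1−θ̂*ᵢ) are Bernoulli
    -- with success probabilities F̂₊* and F̂₋*, i.i.d. across i
    (hfp : ∀ ωF, ∀ i < n,
      ((κF ωF) {ωL | θhstar i ωL = 1 ∧ θstar i ωL = 0}).toReal = Fpstar ωF)
    (hfm : ∀ ωF, ∀ i < n,
      ((κF ωF) {ωL | θstar i ωL = 1 ∧ θhstar i ωL = 0}).toReal = Fmstar ωF)
    (hpairindep : ∀ ωF, iIndepFun
      (fun i ωL => (θstar i ωL, θhstar i ωL)) (κF ωF))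
    -- Γ₊ = Q⁻¹E[D₊ᵢ], Γ₋ = Q⁻¹E[D₋ᵢ] with Q invertible
    (Q EDp EDm Γp Γm : Matrix (Fin k) (Fin k) ℝ) (β : Fin k → ℝ)
    (hQinv : IsUnit Q.det) (hΓp : Γp = Q⁻¹ * EDp) (hΓm : Γm = Q⁻¹ * EDm) :
    -- Var*(b* | F̂₊*, F̂₋*)
    (∀ ωF, matVar (bstar n (Γp.mulVec β) (Γm.mulVec β) θstar θhstar) (κF ωF)
      = (Fpstar ωF * (1 - Fpstar ωF)) • outer (Γp.mulVec β) (Γp.mulVec β)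
        + (Fmstar ωF * (1 - Fmstar ωF)) • outer (Γm.mulVec β) (Γm.mulVec β)
        - (Fpstar ωF * Fmstar ωF) •
            (outer (Γp.mulVec β) (Γm.mulVec β) + outer (Γm.mulVec β) (Γp.mulVec β)))
    -- E*[Var*(b* | F̂₊*, F̂₋*)]
    ∧ (∫ ωF, matVar (bstar n (Γp.mulVec β) (Γm.mulVec β) θstar θhstar) (κF ωF) ∂μF)
      = (1 - 1 / (m : ℝ)) •
          ((Fp * (1 - Fp)) • outer (Γp.mulVec β) (Γp.mulVec β)
            + (Fm * (1 - Fm)) • outer (Γm.mulVec β) (Γm.mulVec β))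
        - (Fp * Fm) •
            (outer (Γp.mulVec β) (Γm.mulVec β) + outer (Γm.mulVec β) (Γp.mulVec β)) := by
  classical
  haveI := hμF
  obtain ⟨hmFp, hmFm⟩ := hmFs
  set u := Γp.mulVec β with hu
  set v := Γm.mulVec β with hv
  set Cuu := outer u u with hCuu
  set Cuv := outer u v with hCuv
  set Cvu := outer v u with hCvu
  set Cvv := outer v v with hCvv
  have part1 : ∀ ωF, matVar (bstar n u v θstar θhstar) (κF ωF)
      = (Fpstar ωF * (1 - Fpstar ωF)) • Cuu + (Fmstar ωF * (1 - Fmstar ωF)) • Cvv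
        - (Fpstar ωF * Fmstar ωF) • (Cuv + Cvu) := by
    intro ωF
    haveI := hκF ωF
    set ν := κF ωF with hν
    set p := Fpstar ωF with hp
    set q := Fmstar ωF with hq
    set c := (Real.sqrt n)⁻¹ with hc
    set A : ℕ → ΩL → ℝ := fun i ωL => θhstar i ωL * (1 - θstar i ωL) with hAdef
    set B : ℕ → ΩL → ℝ := fun i ωL => θstar i ωL * (1 - θhstar i ωL) with hBdef
    have hA01 : ∀ i ωL, A i ωL = 0 ∨ A i ωL = 1 := by
      intro i ω
      rcases hθhs01 i ω with h | h <;> rcases hθs01 i ω with h' | h' <;> simp [hAdef, h, h']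
    have hB01 : ∀ i ωL, B i ωL = 0 ∨ B i ωL = 1 := by
      intro i ω
      rcases hθhs01 i ω with h | h <;> rcases hθs01 i ω with h' | h' <;> simp [hBdef, h, h']
    have hAB0 : ∀ i ωL, A i ωL * B i ωL = 0 := by
      intro i ω
      rcases hθs01 i ω with h | h <;> simp [hAdef, hBdef, h]
    have hAA : ∀ i ωL, A i ωL * A i ωL = A i ωL := by
      intro i ω; rcases hA01 i ω with h | h <;> rw [h] <;> ring
    have hBB : ∀ i ωL, B i ωL * B i ωL = B i ωL := by
      intro i ω; rcases hB01 i ω with h | h <;> rw [h] <;> ring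
    have hmA : ∀ i, Measurable (A i) := fun i => (hmθhs i).mul (measurable_const.sub (hmθs i))
    have hmB : ∀ i, Measurable (B i) := fun i => (hmθs i).mul (measurable_const.sub (hmθhs i))
    have hSA : ∀ i, MeasurableSet {ωL | θhstar i ωL = 1 ∧ θstar i ωL = 0} := fun i =>
      ((hmθhs i) (measurableSet_singleton 1)).inter ((hmθs i) (measurableSet_singleton 0))
    have hSB : ∀ i, MeasurableSet {ωL | θstar i ωL = 1 ∧ θhstar i ωL = 0} := fun i =>
      ((hmθs i) (measurableSet_singleton 1)).inter ((hmθhs i) (measurableSet_singleton 0))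
    have hAind : ∀ i, A i
        = Set.indicator {ωL | θhstar i ωL = 1 ∧ θstar i ωL = 0} (fun _ => (1:ℝ)) := by
      intro i; funext ω
      rcases hθhs01 i ω with h | h <;> rcases hθs01 i ω with h' | h' <;>
        simp [hAdef, Set.indicator_apply, h, h']
    have hBind : ∀ i, B i
        = Set.indicator {ωL | θstar i ωL = 1 ∧ θhstar i ωL = 0} (fun _ => (1:ℝ)) := by
      intro i; funext ω
      rcases hθhs01 i ω with h | h <;> rcases hθs01 i ω with h' | h' <;>
        simp [hBdef, Set.indicator_apply, h, h']
    have hAint : ∀ i, Integrable (A i) ν := by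
      intro i; rw [hAind i]; exact (integrable_const 1).indicator (hSA i)
    have hBint : ∀ i, Integrable (B i) ν := by
      intro i; rw [hBind i]; exact (integrable_const 1).indicator (hSB i)
    have hEA : ∀ i ∈ Finset.range n, ∫ ωL, A i ωL ∂ν = p := by
      intro i hi
      rw [hAind i, integral_indicator_const _ (hSA i), smul_eq_mul, mul_one]
      exact hfp ωF i (Finset.mem_range.mp hi)
    have hEB : ∀ i ∈ Finset.range n, ∫ ωL, B i ωL ∂ν = q := by
      intro i hi
      rw [hBind i, integral_indicator_const _ (hSB i), smul_eq_mul, mul_one]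
      exact hfm ωF i (Finset.mem_range.mp hi)
    have hEAc : ∀ i ∈ Finset.range n, ∫ ωL, (A i ωL - p) ∂ν = 0 := by
      intro i hi
      rw [integral_sub (hAint i) (integrable_const p), hEA i hi, integral_const]
      simp
    have hEBc : ∀ i ∈ Finset.range n, ∫ ωL, (B i ωL - q) ∂ν = 0 := by
      intro i hi
      rw [integral_sub (hBint i) (integrable_const q), hEB i hi, integral_const]
      simp
    have habs : ∀ (f : ΩL → ℝ), (∀ ω, f ω = 0 ∨ f ω = 1) → ∀ (cf : ℝ) (ω : ΩL),
        |f ω - cf| ≤ 1 + |cf| := by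
      intro f h01 cf ω
      rcases h01 ω with h | h <;> rw [h]
      · rw [zero_sub, abs_neg]; linarith
      · rw [abs_le]
        constructor
        · linarith [le_abs_self cf]
        · linarith [neg_abs_le cf]
    have hintAB : ∀ (f g : ΩL → ℝ), Measurable f → Measurable g →
        (∀ ω, f ω = 0 ∨ f ω = 1) → (∀ ω, g ω = 0 ∨ g ω = 1) → ∀ (cf cg : ℝ),
        Integrable (fun ω => (f ω - cf) * (g ω - cg)) ν := by
      intro f g hf hg h01f h01g cf cg
      refine (integrable_const ((1 + |cf|) * (1 + |cg|))).mono'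
        (((hf.sub measurable_const).mul (hg.sub measurable_const)).aestronglyMeasurable)
        (Filter.Eventually.of_forall fun ω => ?_)
      rw [Real.norm_eq_abs, abs_mul]
      exact mul_le_mul (habs f h01f cf ω) (habs g h01g cg ω) (abs_nonneg _) (by positivity)
    have hdAA : ∀ i ∈ Finset.range n, ∫ ωL, (A i ωL - p) * (A i ωL - p) ∂ν = p - p * p := by
      intro i hi
      have hpt : ∀ ω, (A i ω - p) * (A i ω - p) = (1 - 2 * p) * A i ω + p * p := by
        intro ω; linear_combination hAA i ω
      rw [integral_congr_ae (Filter.Eventually.of_forall hpt),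
        integral_add ((hAint i).const_mul _) (integrable_const _), integral_const_mul,
        hEA i hi, integral_const]
      simp only [probReal_univ, measure_univ, ENNReal.toReal_one, smul_eq_mul, one_mul]
      ring
    have hdBB : ∀ i ∈ Finset.range n, ∫ ωL, (B i ωL - q) * (B i ωL - q) ∂ν = q - q * q := by
      intro i hi
      have hpt : ∀ ω, (B i ω - q) * (B i ω - q) = (1 - 2 * q) * B i ω + q * q := by
        intro ω; linear_combination hBB i ω
      rw [integral_congr_ae (Filter.Eventually.of_forall hpt),
        integral_add ((hBint i).const_mul _) (integrable_const _), integral_const_mul,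
        hEB i hi, integral_const]
      simp only [probReal_univ, measure_univ, ENNReal.toReal_one, smul_eq_mul, one_mul]
      ring
    have hdAB : ∀ i ∈ Finset.range n, ∫ ωL, (A i ωL - p) * (B i ωL - q) ∂ν = -(p * q) := by
      intro i hi
      have hpt : ∀ ω, (A i ω - p) * (B i ω - q) = (-q) * A i ω + ((-p) * B i ω + p * q) := by
        intro ω; linear_combination hAB0 i ω
      rw [integral_congr_ae (Filter.Eventually.of_forall hpt),
        integral_add ((hAint i).const_mul (-q))
          (show Integrable (fun ω => (-p) * B i ω + p * q) ν from
            ((hBint i).const_mul _).add (integrable_const _)),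
        integral_add ((hBint i).const_mul (-p)) (integrable_const _), integral_const_mul,
        integral_const_mul, hEA i hi, hEB i hi, integral_const]
      simp only [probReal_univ, measure_univ, ENNReal.toReal_one, smul_eq_mul, one_mul]
      ring
    have hdBA : ∀ i ∈ Finset.range n, ∫ ωL, (B i ωL - q) * (A i ωL - p) ∂ν = -(q * p) := by
      intro i hi
      have hpt : ∀ ω, (B i ω - q) * (A i ω - p) = (-p) * B i ω + ((-q) * A i ω + q * p) := by
        intro ω; linear_combination hAB0 i ω
      rw [integral_congr_ae (Filter.Eventually.of_forall hpt),
        integral_add ((hBint i).const_mul (-p))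
          (show Integrable (fun ω => (-q) * A i ω + q * p) ν from
            ((hAint i).const_mul _).add (integrable_const _)),
        integral_add ((hAint i).const_mul (-q)) (integrable_const _), integral_const_mul,
        integral_const_mul, hEB i hi, hEA i hi, integral_const]
      simp only [probReal_univ, measure_univ, ENNReal.toReal_one, smul_eq_mul, one_mul]
      ring
    have hindep2 : ∀ i j : ℕ, i ≠ j → ∀ (φ ψ : ℝ × ℝ → ℝ), Measurable φ → Measurable ψ →
        Integrable (fun ω => φ (θstar i ω, θhstar i ω)) ν →
        Integrable (fun ω => ψ (θstar j ω, θhstar j ω)) ν →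
        ∫ ω, φ (θstar i ω, θhstar i ω) * ψ (θstar j ω, θhstar j ω) ∂ν
          = (∫ ω, φ (θstar i ω, θhstar i ω) ∂ν) * ∫ ω, ψ (θstar j ω, θhstar j ω) ∂ν := by
      intro i j hij φ ψ hφ hψ h1 h2
      have hind : IndepFun (fun ω => φ (θstar i ω, θhstar i ω))
          (fun ω => ψ (θstar j ω, θhstar j ω)) ν :=
        ((hpairindep ωF).indepFun hij).comp hφ hψ
      exact hind.integral_mul_eq_mul_integral h1.1 h2.1
    have hmφA : Measurable (fun st : ℝ × ℝ => st.2 * (1 - st.1) - p) :=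
      (measurable_snd.mul (measurable_const.sub measurable_fst)).sub measurable_const
    have hmφB : Measurable (fun st : ℝ × ℝ => st.1 * (1 - st.2) - q) :=
      (measurable_fst.mul (measurable_const.sub measurable_snd)).sub measurable_const
    have hzAA : ∀ i ∈ Finset.range n, ∀ j ∈ Finset.range n, i ≠ j →
        ∫ ω, (A i ω - p) * (A j ω - p) ∂ν = 0 := by
      intro i hi j hj hij
      have h := hindep2 i j hij (fun st => st.2 * (1 - st.1) - p)
        (fun st => st.2 * (1 - st.1) - p) hmφA hmφA
        (by exact (hAint i).sub (integrable_const p)) (by exact (hAint j).sub (integrable_const p))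
      simp only [] at h
      have h0i := hEAc i hi
      have h0j := hEAc j hj
      simp only [hAdef] at h0i h0j ⊢
      rw [h, h0i, h0j, mul_zero]
    have hzAB : ∀ i ∈ Finset.range n, ∀ j ∈ Finset.range n, i ≠ j →
        ∫ ω, (A i ω - p) * (B j ω - q) ∂ν = 0 := by
      intro i hi j hj hij
      have h := hindep2 i j hij (fun st => st.2 * (1 - st.1) - p)
        (fun st => st.1 * (1 - st.2) - q) hmφA hmφB
        (by exact (hAint i).sub (integrable_const p)) (by exact (hBint j).sub (integrable_const q))
      simp only [] at h
      have h0i := hEAc i hi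
      simp only [hAdef, hBdef] at h0i ⊢
      rw [h, h0i, zero_mul]
    have hzBA : ∀ i ∈ Finset.range n, ∀ j ∈ Finset.range n, i ≠ j →
        ∫ ω, (B i ω - q) * (A j ω - p) ∂ν = 0 := by
      intro i hi j hj hij
      have h := hindep2 i j hij (fun st => st.1 * (1 - st.2) - q)
        (fun st => st.2 * (1 - st.1) - p) hmφB hmφA
        (by exact (hBint i).sub (integrable_const q)) (by exact (hAint j).sub (integrable_const p))
      simp only [] at h
      have h0i := hEBc i hi
      simp only [hAdef, hBdef] at h0i ⊢
      rw [h, h0i, zero_mul]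
    have hzBB : ∀ i ∈ Finset.range n, ∀ j ∈ Finset.range n, i ≠ j →
        ∫ ω, (B i ω - q) * (B j ω - q) ∂ν = 0 := by
      intro i hi j hj hij
      have h := hindep2 i j hij (fun st => st.1 * (1 - st.2) - q)
        (fun st => st.1 * (1 - st.2) - q) hmφB hmφB
        (by exact (hBint i).sub (integrable_const q)) (by exact (hBint j).sub (integrable_const q))
      simp only [] at h
      have h0i := hEBc i hi
      have h0j := hEBc j hj
      simp only [hBdef] at h0i h0j ⊢
      rw [h, h0i, h0j, mul_zero]
    have hbstar : ∀ ωL, bstar n u v θstar θhstar ωL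
        = -(c • ∑ i ∈ Finset.range n, (A i ωL • u + B i ωL • v)) := fun ωL => rfl
    have hWint : ∀ i, Integrable (fun ωL => A i ωL • u + B i ωL • v) ν :=
      fun i => ((hAint i).smul_const u).add ((hBint i).smul_const v)
    have hWval : ∀ i ∈ Finset.range n, ∫ ωL, (A i ωL • u + B i ωL • v) ∂ν = p • u + q • v := by
      intro i hi
      rw [integral_add ((hAint i).smul_const u) ((hBint i).smul_const v),
        integral_smul_const, integral_smul_const, hEA i hi, hEB i hi]
    have hmean : ∫ ωL, bstar n u v θstar θhstar ωL ∂ν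
        = -(c • ∑ _i ∈ Finset.range n, (p • u + q • v)) := by
      rw [integral_congr_ae (Filter.Eventually.of_forall hbstar), integral_neg, integral_smul,
        integral_finset_sum _ (fun i _ => hWint i), Finset.sum_congr rfl hWval]
    have hcent : ∀ ωL, bstar n u v θstar θhstar ωL - ∫ x, bstar n u v θstar θhstar x ∂ν
        = -(c • ∑ i ∈ Finset.range n, ((A i ωL - p) • u + (B i ωL - q) • v)) := by
      intro ωL
      rw [hmean, hbstar ωL]
      have hsum : ∑ i ∈ Finset.range n, ((A i ωL - p) • u + (B i ωL - q) • v)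
          = (∑ i ∈ Finset.range n, (A i ωL • u + B i ωL • v))
            - ∑ _i ∈ Finset.range n, (p • u + q • v) := by
        rw [← Finset.sum_sub_distrib]
        refine Finset.sum_congr rfl fun i _ => ?_
        rw [sub_smul, sub_smul]
        abel
      rw [hsum, smul_sub]
      abel
    set D : Matrix (Fin k) (Fin k) ℝ := (p - p * p) • Cuu + (-(p * q)) • Cuv
      + (-(q * p)) • Cvu + (q - q * q) • Cvv with hD
    have hMint : ∀ i j : ℕ, Integrable (fun ωL =>
        ((A i ωL - p) * (A j ωL - p)) • Cuu + ((A i ωL - p) * (B j ωL - q)) • Cuv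
        + ((B i ωL - q) * (A j ωL - p)) • Cvu + ((B i ωL - q) * (B j ωL - q)) • Cvv) ν :=
      fun i j => ((((hintAB _ _ (hmA i) (hmA j) (hA01 i) (hA01 j) p p).smul_const Cuu).add
        ((hintAB _ _ (hmA i) (hmB j) (hA01 i) (hB01 j) p q).smul_const Cuv)).add
        ((hintAB _ _ (hmB i) (hmA j) (hB01 i) (hA01 j) q p).smul_const Cvu)).add
        ((hintAB _ _ (hmB i) (hmB j) (hB01 i) (hB01 j) q q).smul_const Cvv)
    have hMval : ∀ i ∈ Finset.range n, ∀ j ∈ Finset.range n,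
        (∫ ωL, (((A i ωL - p) * (A j ωL - p)) • Cuu + ((A i ωL - p) * (B j ωL - q)) • Cuv
          + ((B i ωL - q) * (A j ωL - p)) • Cvu + ((B i ωL - q) * (B j ωL - q)) • Cvv) ∂ν)
          = if i = j then D else 0 := by
      intro i hi j hj
      have I1 := hintAB _ _ (hmA i) (hmA j) (hA01 i) (hA01 j) p p
      have I2 := hintAB _ _ (hmA i) (hmB j) (hA01 i) (hB01 j) p q
      have I3 := hintAB _ _ (hmB i) (hmA j) (hB01 i) (hA01 j) q p
      have I4 := hintAB _ _ (hmB i) (hmB j) (hB01 i) (hB01 j) q q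
      rw [integral_add
          (show Integrable (fun ωL => ((A i ωL - p) * (A j ωL - p)) • Cuu
              + ((A i ωL - p) * (B j ωL - q)) • Cuv
              + ((B i ωL - q) * (A j ωL - p)) • Cvu) ν from
            ((I1.smul_const Cuu).add (I2.smul_const Cuv)).add (I3.smul_const Cvu))
          (I4.smul_const Cvv),
        integral_add
          (show Integrable (fun ωL => ((A i ωL - p) * (A j ωL - p)) • Cuu
              + ((A i ωL - p) * (B j ωL - q)) • Cuv) ν from
            (I1.smul_const Cuu).add (I2.smul_const Cuv)) (I3.smul_const Cvu),
        integral_add (I1.smul_const Cuu) (I2.smul_const Cuv),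
        integral_smul_const, integral_smul_const, integral_smul_const, integral_smul_const]
      by_cases h : i = j
      · subst h
        rw [hdAA i hi, hdAB i hi, hdBA i hi, hdBB i hi, if_pos rfl]
      · rw [hzAA i hi j hj h, hzAB i hi j hj h, hzBA i hi j hj h, hzBB i hi j hj h, if_neg h]
        simp
    have hpt2 : ∀ ωL, outer (bstar n u v θstar θhstar ωL - ∫ x, bstar n u v θstar θhstar x ∂ν)
        (bstar n u v θstar θhstar ωL - ∫ x, bstar n u v θstar θhstar x ∂ν)
        = (c * c) • ∑ i ∈ Finset.range n, ∑ j ∈ Finset.range n,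
            (((A i ωL - p) * (A j ωL - p)) • Cuu + ((A i ωL - p) * (B j ωL - q)) • Cuv
            + ((B i ωL - q) * (A j ωL - p)) • Cvu + ((B i ωL - q) * (B j ωL - q)) • Cvv) := by
      intro ωL
      rw [hcent ωL, outer_neg_smul, outer_sum_sum]
      congr 1
      refine Finset.sum_congr rfl fun i _ => Finset.sum_congr rfl fun j _ => ?_
      exact outer_expand _ _ _ _ u v u v
    have h0 : matVar (bstar n u v θstar θhstar) ν
        = ∫ ωL, outer (bstar n u v θstar θhstar ωL - ∫ x, bstar n u v θstar θhstar x ∂ν)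
            (bstar n u v θstar θhstar ωL - ∫ x, bstar n u v θstar θhstar x ∂ν) ∂ν := rfl
    have hinner : ∀ i ∈ Finset.range n,
        ∑ j ∈ Finset.range n, (if i = j then D else 0) = D := by
      intro i hi
      rw [Finset.sum_ite_eq]
      exact if_pos hi
    rw [h0, integral_congr_ae (Filter.Eventually.of_forall hpt2), integral_smul,
      integral_finset_sum _ (fun i _ => integrable_finset_sum _ (fun j _ => hMint i j)),
      Finset.sum_congr rfl (fun i hi =>
        integral_finset_sum (Finset.range n) (fun j _ => hMint i j)),
      Finset.sum_congr rfl (fun i hi => Finset.sum_congr rfl (fun j hj => hMval i hi j hj)),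
      Finset.sum_congr rfl hinner, Finset.sum_const, Finset.card_range]
    have hcc : c * c = ((n : ℝ))⁻¹ := by
      rw [hc, ← mul_inv, Real.mul_self_sqrt (Nat.cast_nonneg n)]
    rw [hcc, ← Nat.cast_smul_eq_nsmul ℝ n D, smul_smul,
      inv_mul_cancel₀ (Nat.cast_ne_zero.mpr hn.ne'), one_smul, hD]
    ext a b
    simp only [hCuu, hCuv, hCvu, hCvv, outer, Matrix.of_apply, Matrix.add_apply,
      Matrix.sub_apply, Matrix.smul_apply, smul_eq_mul]
    ring
  refine ⟨part1, ?_⟩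
  rw [integral_congr_ae (Filter.Eventually.of_forall part1)]
  have hFple : ∀ ω, 0 ≤ Fpstar ω ∧ Fpstar ω ≤ 1 := by
    intro ω
    obtain ⟨j, hj, hval⟩ := (hsupp ω).1
    constructor
    · rw [hval]; positivity
    · rw [hval, div_le_one (by exact_mod_cast hm)]
      exact_mod_cast hj
  have hFmle : ∀ ω, 0 ≤ Fmstar ω ∧ Fmstar ω ≤ 1 := by
    intro ω
    obtain ⟨j, hj, hval⟩ := (hsupp ω).2
    constructor
    · rw [hval]; positivity
    · rw [hval, div_le_one (by exact_mod_cast hm)]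
      exact_mod_cast hj
  have hbnd : ∀ (f : ΩF → ℝ), (∀ ω, 0 ≤ f ω ∧ f ω ≤ 1) → ∀ ω, |f ω| ≤ 1 := by
    intro f hf ω
    rw [abs_le]
    exact ⟨by linarith [(hf ω).1], (hf ω).2⟩
  have hintFp : Integrable Fpstar μF :=
    (integrable_const (1:ℝ)).mono' hmFp.aestronglyMeasurable
      (Filter.Eventually.of_forall fun ω => by
        rw [Real.norm_eq_abs]; exact hbnd Fpstar hFple ω)
  have hintFm : Integrable Fmstar μF :=
    (integrable_const (1:ℝ)).mono' hmFm.aestronglyMeasurable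
      (Filter.Eventually.of_forall fun ω => by
        rw [Real.norm_eq_abs]; exact hbnd Fmstar hFmle ω)
  have hintP : Integrable (fun ω => Fpstar ω * (1 - Fpstar ω)) μF :=
    (integrable_const (1:ℝ)).mono'
      ((hmFp.mul (measurable_const.sub hmFp)).aestronglyMeasurable)
      (Filter.Eventually.of_forall fun ω => by
        rw [Real.norm_eq_abs, abs_mul]
        have h1 := hbnd Fpstar hFple ω
        have h2 : |1 - Fpstar ω| ≤ 1 := by
          rw [abs_le]; exact ⟨by linarith [(hFple ω).2], by linarith [(hFple ω).1]⟩
        nlinarith [abs_nonneg (Fpstar ω), abs_nonneg (1 - Fpstar ω)])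
  have hintQ : Integrable (fun ω => Fmstar ω * (1 - Fmstar ω)) μF :=
    (integrable_const (1:ℝ)).mono'
      ((hmFm.mul (measurable_const.sub hmFm)).aestronglyMeasurable)
      (Filter.Eventually.of_forall fun ω => by
        rw [Real.norm_eq_abs, abs_mul]
        have h1 := hbnd Fmstar hFmle ω
        have h2 : |1 - Fmstar ω| ≤ 1 := by
          rw [abs_le]; exact ⟨by linarith [(hFmle ω).2], by linarith [(hFmle ω).1]⟩
        nlinarith [abs_nonneg (Fmstar ω), abs_nonneg (1 - Fmstar ω)])
  have hintR : Integrable (fun ω => Fpstar ω * Fmstar ω) μF :=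
    (integrable_const (1:ℝ)).mono' ((hmFp.mul hmFm).aestronglyMeasurable)
      (Filter.Eventually.of_forall fun ω => by
        rw [Real.norm_eq_abs, abs_mul]
        have h1 := hbnd Fpstar hFple ω
        have h2 := hbnd Fmstar hFmle ω
        nlinarith [abs_nonneg (Fpstar ω), abs_nonneg (Fmstar ω)])
  rw [integral_sub
      (show Integrable (fun ωF => (Fpstar ωF * (1 - Fpstar ωF)) • Cuu
          + (Fmstar ωF * (1 - Fmstar ωF)) • Cvv) μF from
        (hintP.smul_const Cuu).add (hintQ.smul_const Cvv))
      (hintR.smul_const (Cuv + Cvu)),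
    integral_add (hintP.smul_const Cuu) (hintQ.smul_const Cvv),
    integral_smul_const, integral_smul_const, integral_smul_const]
  have hP : ∫ ω, Fpstar ω * (1 - Fpstar ω) ∂μF = (1 - 1/(m:ℝ)) * (Fp * (1 - Fp)) :=
    moment_var μF hm hmFp (fun ω => (hsupp ω).1) hbinp
  have hQ : ∫ ω, Fmstar ω * (1 - Fmstar ω) ∂μF = (1 - 1/(m:ℝ)) * (Fm * (1 - Fm)) :=
    moment_var μF hm hmFm (fun ω => (hsupp ω).2) hbinm
  have hR : ∫ ω, Fpstar ω * Fmstar ω ∂μF = Fp * Fm := by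
    calc ∫ ω, Fpstar ω * Fmstar ω ∂μF = integral μF (Fpstar * Fmstar) := rfl
      _ = (∫ ω, Fpstar ω ∂μF) * ∫ ω, Fmstar ω ∂μF :=
          hFindep.integral_mul_eq_mul_integral hintFp.1 hintFm.1
      _ = Fp * Fm := by
          rw [moment_id μF hm hmFp (fun ω => (hsupp ω).1) hbinp,
            moment_id μF hm hmFm (fun ω => (hsupp ω).2) hbinm]
  rw [hP, hQ, hR, smul_add (1 - 1/(m:ℝ)) ((Fp * (1 - Fp)) • Cuu) ((Fm * (1 - Fm)) • Cvv),
    smul_smul, smul_smul]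

end
end
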